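/- Let 0 < b1, b2 < 1, q = b1/b2, k ≥ 1, and consider the two-particle configuration x = (x_1 < x_2) with y = (y_1 > ... > y_k) satisfying y_k > x_2. Then for the one-step update of the two-particle S6V location process, E^x[ H̃(x(1), y) ] = q^{-k} L_1 + q^{-(k-1)} b2^{x_2 - x_1} (L_1 - q^{-k} L_2), where L_1 = E^{(x_2)}[ H̃(x_2(1), y) ] is the corresponding expectation for the single particle started at x_2 and L_2 = H̃(∅, y) = 0 is the expectation for the empty configuration, i.e. E^x[ H̃(x(1), y) ] = (q^{-k} + q^{-(k-1)} b2^{x_2 - x_1}) L_1. -/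

import Mathlib

/-!  The stochastic six vertex model as an interacting particle system, in particle
location coordinates.  A configuration is a strictly increasing list of particle
locations in `ℤ` (finitely many particles).  The one-step update acts sequentially
from the left: a (non-displaced) particle stays with probability `b1` and otherwise
jumps right a geometric(`b2`) number of sites truncated by the position of the next
particle; a particle whose site has just been reached by the previous particle is
displaced and forced to jump (case (b) of the update rule). -/

/-- Probability that a particle jumps `n` sites right, given the displaced flag `disp`
and the gap `gap` to its right neighbor (`none` if there is no right neighbor). -/
noncomputable def jumpProb (b1 b2 : ℝ) (disp : Bool) (gap : Option ℤ) (n : ℤ) : ℝ :=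
  if disp then
    match gap with
    | none => if 1 ≤ n then (1 - b2) * b2 ^ (n - 1).toNat else 0
    | some d => if 1 ≤ n ∧ n < d then (1 - b2) * b2 ^ (n - 1).toNat
                else if n = d then b2 ^ (d - 1).toNat else 0
  else
    if n = 0 then b1
    else match gap with
      | none => if 1 ≤ n then (1 - b1) * (1 - b2) * b2 ^ (n - 1).toNat else 0
      | some d => if 1 ≤ n ∧ n < d then (1 - b1) * (1 - b2) * b2 ^ (n - 1).toNat
                  else if n = d then (1 - b1) * b2 ^ (d - 1).toNat else 0

/-- One-step transition probability of the S6V location process from the increasing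
list `x` of particle locations to the increasing list `z`, where `disp` records
whether the leftmost particle of `x` has just been displaced. -/
noncomputable def stepK (b1 b2 : ℝ) : Bool → List ℤ → List ℤ → ℝ
  | _, [], [] => 1
  | disp, a :: rest, z :: zrest =>
      jumpProb b1 b2 disp (rest.head?.map (fun nb => nb - a)) (z - a) *
        stepK b1 b2 (decide (rest.head? = some z)) rest zrest
  | _, _, _ => 0

/-- One-step transition probability of the reversed S6V location process acting on
decreasing lists (particles jump left): the mirror image of `stepK`. -/
noncomputable def revK (b1 b2 : ℝ) (y z : List ℤ) : ℝ :=
  stepK b1 b2 false ((y.map fun a => -a).reverse) ((z.map fun a => -a).reverse)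

/-- Schütz's duality functional in particle-location coordinates:
`H̃(x, y) = Π_i 1_{y_i ∈ x} q^{-#{j : x_j ≤ y_i}}`. -/
noncomputable def Hfun (q : ℝ) (x y : List ℤ) : ℝ :=
  (y.map fun yi =>
    (if yi ∈ x then (1 : ℝ) else 0) *
      q ^ (-(x.countP (fun xj => decide (xj ≤ yi)) : ℤ))).prod

/-! After one step a configuration keeps its number of particles, and `H̃(z, y) ≠ 0` forces every
`yᵢ` to be a particle of `z`. The left particle never passes `x₂ < y_k`, so for `k ≥ 2` every
expectation vanishes, while for `k = 1` only the configurations `z = (x₁ + n, y₁)`,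
`0 ≤ n ≤ x₂ - x₁`, contribute, each with `H̃ = q⁻²`. Summing the truncated geometric law of the
left particle gives `q⁻² (1 - b₁) (1 + b₁ b₂^(x₂-x₁-1)) p`, where `p` is the probability of the
forced jump to `y₁`, against `L₁ = q⁻¹ (1 - b₁) p`; the two sides then agree because
`b₁ q⁻² = b₂ q⁻¹`. -/

section Support

variable {b1 b2 : ℝ}

lemma jumpProb_some_eq_zero_of_notMem_Icc (disp : Bool) {d n : ℤ} (hd : 0 ≤ d)
    (hn : n ∉ Set.Icc 0 d) : jumpProb b1 b2 disp (some d) n = 0 := by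
  rw [Set.mem_Icc, not_and_or, not_le, not_le] at hn
  cases disp <;> simp [jumpProb, show n ≠ 0 by omega, show n ≠ d by omega,
    show ¬ (1 ≤ n ∧ n < d) by omega]

lemma length_eq_of_stepK_ne_zero {disp : Bool} {x z : List ℤ} (h : stepK b1 b2 disp x z ≠ 0) :
    z.length = x.length := by
  induction x generalizing disp z with
  | nil => cases z <;> simp_all [stepK]
  | cons a rest ih =>
    cases z with
    | nil => simp [stepK] at h
    | cons c zs =>
      rw [stepK] at h
      simp [ih (right_ne_zero_of_mul h)]

lemma mem_Icc_of_stepK_ne_zero {disp : Bool} {a b c : ℤ} {rest zs : List ℤ} (hab : a ≤ b)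
    (h : stepK b1 b2 disp (a :: b :: rest) (c :: zs) ≠ 0) : c ∈ Set.Icc a b := by
  rw [stepK] at h
  have hjump := left_ne_zero_of_mul h
  simp only [List.head?_cons, Option.map_some] at hjump
  by_contra hc
  refine hjump (jumpProb_some_eq_zero_of_notMem_Icc _ (by omega) ?_)
  simp only [Set.mem_Icc] at hc ⊢
  omega

end Support

lemma mem_of_Hfun_ne_zero {q : ℝ} {z y : List ℤ} (h : Hfun q z y ≠ 0) {c : ℤ} (hc : c ∈ y) :
    c ∈ z := by
  by_contra hcz
  refine h (List.prod_eq_zero (List.mem_map.2 ⟨c, hc, ?_⟩))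
  simp [hcz]

lemma tsum_stepK_mul_Hfun_eq_zero_of_length_lt {b1 b2 q : ℝ} {disp : Bool} {x y : List ℤ}
    (hy : y.Nodup) (hxy : x.length < y.length) :
    ∑' z : List ℤ, stepK b1 b2 disp x z * Hfun q z y = 0 := by
  refine (tsum_congr fun z => ?_).trans tsum_zero
  by_contra h
  have hlen := length_eq_of_stepK_ne_zero (left_ne_zero_of_mul h)
  have hsub : y ⊆ z := fun c hc => mem_of_Hfun_ne_zero (right_ne_zero_of_mul h) hc
  have := hy.length_le_of_subset hsub
  omega

section Values

variable (b1 b2 : ℝ)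

lemma jumpProb_false_some_zero (d : ℤ) : jumpProb b1 b2 false (some d) 0 = b1 := by
  simp [jumpProb]

lemma jumpProb_false_some_of_lt {d n : ℤ} (hn : 1 ≤ n) (hnd : n < d) :
    jumpProb b1 b2 false (some d) n = (1 - b1) * (1 - b2) * b2 ^ (n - 1).toNat := by
  simp [jumpProb, hn, hnd, show n ≠ 0 by omega]

lemma jumpProb_false_some_self {d : ℤ} (hd : 1 ≤ d) :
    jumpProb b1 b2 false (some d) d = (1 - b1) * b2 ^ (d - 1).toNat := by
  simp [jumpProb, show d ≠ 0 by omega]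

lemma jumpProb_false_none {n : ℤ} (hn : 1 ≤ n) :
    jumpProb b1 b2 false none n = (1 - b1) * jumpProb b1 b2 true none n := by
  simp [jumpProb, hn, show n ≠ 0 by omega, mul_assoc]

lemma sum_range_jumpProb_false_some (e : ℕ) :
    ∑ n ∈ Finset.range (e + 1), jumpProb b1 b2 false (some (e + 1)) n = 1 - (1 - b1) * b2 ^ e := by
  rw [Finset.sum_range_succ', Nat.cast_zero, jumpProb_false_some_zero]
  have hmid : ∀ i ∈ Finset.range e, jumpProb b1 b2 false (some (e + 1)) ((i + 1 : ℕ) : ℤ)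
      = (1 - b1) * ((1 - b2) * b2 ^ i) := fun i hi => by
    rw [jumpProb_false_some_of_lt _ _ (by omega) (by have := Finset.mem_range.1 hi; omega)]
    simp [mul_assoc]
  rw [Finset.sum_congr rfl hmid, ← Finset.mul_sum, ← Finset.mul_sum, mul_neg_geom_sum]
  ring

lemma sum_range_jumpProb_mul_jumpProb (e : ℕ) {m : ℤ} (hm : 1 ≤ m) :
    ∑ n ∈ Finset.range (e + 2), jumpProb b1 b2 false (some (e + 1)) n *
        jumpProb b1 b2 (decide ((n : ℤ) = e + 1)) none m
      = (1 - b1) * (1 + b1 * b2 ^ e) * jumpProb b1 b2 true none m := by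
  have hfree : ∀ n ∈ Finset.range (e + 1), jumpProb b1 b2 (decide ((n : ℤ) = e + 1)) none m
      = (1 - b1) * jumpProb b1 b2 true none m := fun n hn => by
    rw [decide_eq_false (by have := Finset.mem_range.1 hn; omega), jumpProb_false_none _ _ hm]
  rw [Finset.sum_range_succ, Finset.sum_congr rfl fun n hn => congrArg _ (hfree n hn),
    ← Finset.sum_mul, sum_range_jumpProb_false_some, Nat.cast_succ, decide_eq_true rfl,
    jumpProb_false_some_self _ _ (by omega)]
  simp only [add_sub_cancel_right, Int.toNat_natCast]
  ring

end Values

section Expectations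

variable {b1 b2 : ℝ} (q : ℝ) (disp : Bool)

lemma tsum_stepK_singleton_mul_Hfun_singleton (x y1 : ℤ) :
    ∑' z : List ℤ, stepK b1 b2 disp [x] z * Hfun q z [y1]
      = jumpProb b1 b2 disp none (y1 - x) * q ^ (-1 : ℤ) := by
  rw [tsum_eq_single [y1] fun z hz => ?_]
  · simp [stepK, Hfun]
  · by_contra h
    obtain ⟨z1, rfl⟩ := List.length_eq_one_iff.mp (length_eq_of_stepK_ne_zero (left_ne_zero_of_mul h))
    have := mem_of_Hfun_ne_zero (right_ne_zero_of_mul h) (List.mem_singleton_self y1)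
    simp_all

lemma Hfun_pair_singleton {z1 y1 : ℤ} (hzy : z1 ≤ y1) : Hfun q [z1, y1] [y1] = q ^ (-2 : ℤ) := by
  simp [Hfun, List.countP_cons, hzy]

lemma stepK_pair_pair (x1 x2 z1 z2 : ℤ) :
    stepK b1 b2 disp [x1, x2] [z1, z2] = jumpProb b1 b2 disp (some (x2 - x1)) (z1 - x1) *
      jumpProb b1 b2 (decide (z1 = x2)) none (z2 - x2) := by
  simp [stepK, eq_comm]

lemma tsum_stepK_pair_mul_Hfun_singleton {x1 y1 : ℤ} {e : ℕ} (hy1 : x1 + (e + 1) < y1) :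
    ∑' z : List ℤ, stepK b1 b2 disp [x1, x1 + (e + 1)] z * Hfun q z [y1]
      = q ^ (-2 : ℤ) * ∑ n ∈ Finset.range (e + 2), jumpProb b1 b2 disp (some (e + 1)) n *
          jumpProb b1 b2 (decide ((n : ℤ) = e + 1)) none (y1 - (x1 + (e + 1))) := by
  rw [tsum_eq_sum (s := (Finset.range (e + 2)).image fun n : ℕ => [x1 + n, y1]) fun z hz => ?_,
    Finset.sum_image fun _ _ _ _ h => by simpa using h, Finset.mul_sum]
  · refine Finset.sum_congr rfl fun n hn => ?_
    rw [Finset.mem_range] at hn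
    rw [stepK_pair_pair, Hfun_pair_singleton _ (by omega), mul_comm, add_sub_cancel_left,
      add_sub_cancel_left]
    simp only [add_right_inj]
  · by_contra h
    obtain ⟨z1, z2, rfl⟩ := List.length_eq_two.mp (length_eq_of_stepK_ne_zero (left_ne_zero_of_mul h))
    obtain ⟨hxz, hzx⟩ := mem_Icc_of_stepK_ne_zero (by omega) (left_ne_zero_of_mul h)
    have hy1z : y1 = z1 ∨ y1 = z2 := by
      simpa using mem_of_Hfun_ne_zero (right_ne_zero_of_mul h) (List.mem_singleton_self y1)
    obtain rfl : z2 = y1 := by omega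
    refine hz (Finset.mem_image.2 ⟨(z1 - x1).toNat, Finset.mem_range.2 (by omega), ?_⟩)
    rw [Int.toNat_of_nonneg (by omega), add_sub_cancel]

lemma stepK_pair_mul_Hfun_eq_zero {x1 x2 a b : ℤ} {y z : List ℤ} (hx : x1 ≤ x2) (hab : a ≠ b)
    (ha : a ∈ y) (hb : b ∈ y) (hxa : x2 < a) (hxb : x2 < b) :
    stepK b1 b2 disp [x1, x2] z * Hfun q z y = 0 := by
  by_contra h
  obtain ⟨z1, z2, rfl⟩ := List.length_eq_two.mp (length_eq_of_stepK_ne_zero (left_ne_zero_of_mul h))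
  have hz1 := mem_Icc_of_stepK_ne_zero hx (left_ne_zero_of_mul h)
  have haz := mem_of_Hfun_ne_zero (right_ne_zero_of_mul h) ha
  have hbz := mem_of_Hfun_ne_zero (right_ne_zero_of_mul h) hb
  simp only [Set.mem_Icc, List.mem_cons, List.not_mem_nil, or_false] at hz1 haz hbz
  omega

end Expectations

lemma inv_sq_mul_eq_inv_mul_of_eq_div {b1 b2 q : ℝ} (hq : q = b1 / b2) :
    q⁻¹ ^ 2 * b1 = q⁻¹ * b2 := by
  subst hq
  rcases eq_or_ne b1 0 with rfl | hb1
  · simp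
  rw [inv_div]
  field_simp

theorem s6v_two_particle_decomposition_general
    (b1 b2 q : ℝ) (hq : q = b1 / b2) (k : ℕ) (hk : 1 ≤ k)
    (x1 x2 : ℤ) (hx : x1 < x2)
    (y : List ℤ) (hy : y.Chain' (· > ·)) (hylen : y.length = k)
    (hyk : ∀ c ∈ y, x2 < c) :
    (∑' z : List ℤ, stepK b1 b2 false [x1, x2] z * Hfun q z y
        = q ^ (-(k : ℤ)) * (∑' z : List ℤ, stepK b1 b2 false [x2] z * Hfun q z y)
          + q ^ (-((k : ℤ) - 1)) * b2 ^ (x2 - x1).toNat *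
            ((∑' z : List ℤ, stepK b1 b2 false [x2] z * Hfun q z y)
              - q ^ (-(k : ℤ)) *
                (∑' z : List ℤ, stepK b1 b2 false [] z * Hfun q z y))) ∧
    (∑' z : List ℤ, stepK b1 b2 false [x1, x2] z * Hfun q z y
        = (q ^ (-(k : ℤ)) + q ^ (-((k : ℤ) - 1)) * b2 ^ (x2 - x1).toNat) *
          (∑' z : List ℤ, stepK b1 b2 false [x2] z * Hfun q z y)) := by
  have hyNodup : y.Nodup := hy.pairwise.nodup
  have hL2 : ∑' z : List ℤ, stepK b1 b2 false [] z * Hfun q z y = 0 :=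
    tsum_stepK_mul_Hfun_eq_zero_of_length_lt hyNodup (by rw [List.length_nil]; omega)
  suffices h : ∑' z : List ℤ, stepK b1 b2 false [x1, x2] z * Hfun q z y
      = (q ^ (-(k : ℤ)) + q ^ (-((k : ℤ) - 1)) * b2 ^ (x2 - x1).toNat) *
          ∑' z : List ℤ, stepK b1 b2 false [x2] z * Hfun q z y from
    ⟨by rw [h, hL2]; ring, h⟩
  match y, hylen with
  | [], hylen => simp only [List.length_nil] at hylen; omega
  | [y1], hylen =>
    obtain rfl : k = 1 := hylen.symm
    obtain ⟨e, rfl⟩ : ∃ e : ℕ, x2 = x1 + (e + 1) := ⟨(x2 - x1 - 1).toNat, by omega⟩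
    have hy1 := hyk y1 (List.mem_singleton_self y1)
    rw [tsum_stepK_pair_mul_Hfun_singleton q false hy1,
      sum_range_jumpProb_mul_jumpProb _ _ _ (by omega), tsum_stepK_singleton_mul_Hfun_singleton,
      jumpProb_false_none _ _ (by omega), show (x1 + (e + 1) - x1).toNat = e + 1 by omega]
    set p := jumpProb b1 b2 true none (y1 - (x1 + (e + 1)))
    simp only [Nat.cast_one, sub_self, neg_zero, zpow_neg, zpow_ofNat]
    linear_combination (1 - b1) * b2 ^ e * p * inv_sq_mul_eq_inv_mul_of_eq_div hq
  | a :: b :: t, _ =>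
    have hab : a ≠ b := (List.isChain_cons_cons.mp hy).1.ne'
    rw [tsum_stepK_mul_Hfun_eq_zero_of_length_lt (x := [x2]) hyNodup (by simp), mul_zero]
    exact (tsum_congr fun z => stepK_pair_mul_Hfun_eq_zero q false hx.le hab (by simp) (by simp)
      (hyk a (by simp)) (hyk b (by simp))).trans tsum_zero

/-- Decomposition identity (Case (2c) specialized to two particles): for
`x = (x1 < x2)`, `y = (y_1 > ... > y_k)` with `y_k > x2` and `q = b1/b2`,
`E^x[H̃(x(1), y)] = q^{-k} L1 + q^{-(k-1)} b2^{x2-x1} (L1 - q^{-k} L2)`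
where `L1 = E^{(x2)}[H̃(·(1), y)]` is the one-particle expectation started at `x2` and
`L2 = H̃(∅, y)` is the expectation for the empty configuration; equivalently
`E^x[H̃(x(1), y)] = (q^{-k} + q^{-(k-1)} b2^{x2-x1}) L1`. -/
theorem s6v_two_particle_decomposition
    (b1 b2 q : ℝ) (hb1 : 0 < b1) (hb1' : b1 < 1) (hb2 : 0 < b2) (hb2' : b2 < 1)
    (hq : q = b1 / b2) (k : ℕ) (hk : 1 ≤ k)
    (x1 x2 : ℤ) (hx : x1 < x2)
    (y : List ℤ) (hy : y.Chain' (· > ·)) (hylen : y.length = k)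
    (hyk : ∀ c ∈ y, x2 < c) :
    (∑' z : List ℤ, stepK b1 b2 false [x1, x2] z * Hfun q z y
        = q ^ (-(k : ℤ)) * (∑' z : List ℤ, stepK b1 b2 false [x2] z * Hfun q z y)
          + q ^ (-((k : ℤ) - 1)) * b2 ^ (x2 - x1).toNat *
            ((∑' z : List ℤ, stepK b1 b2 false [x2] z * Hfun q z y)
              - q ^ (-(k : ℤ)) *
                (∑' z : List ℤ, stepK b1 b2 false [] z * Hfun q z y))) ∧
    (∑' z : List ℤ, stepK b1 b2 false [x1, x2] z * Hfun q z y
        = (q ^ (-(k : ℤ)) + q ^ (-((k : ℤ) - 1)) * b2 ^ (x2 - x1).toNat) *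
          (∑' z : List ℤ, stepK b1 b2 false [x2] z * Hfun q z y)) :=
  s6v_two_particle_decomposition_general b1 b2 q hq k hk x1 x2 hx y hy hylen hyk
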